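/- arXiv:1810.04115 — 3 statements merged into one kernel-verified Lean document; each statement's English description precedes it below -/
import Mathlib

section
/- Let H be a real Hilbert space and F : H → H a continuous map satisfying ⟨x − x', F(x) − F(x')⟩ ≤ −λ‖x − x'‖² for all x, x' ∈ H and some λ > 0. Then F has a unique zero ξ ∈ H. -/
/-!
With `g = -F` the hypothesis says that `g` is strongly monotone,
`λ ‖x - y‖² ≤ ⟪g x - g y, x - y⟫`, which makes zeros unique. Existence is first proved in finite
dimension, by induction on the dimension: along a unit vector `u` the map `t ↦ ⟪g (v + t • u), u⟫`
is strongly monotone on `ℝ`, so it has a zero `τ v` (intermediate value theorem), depending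
continuously on `v ∈ u^⊥`; and `v ↦ P (g (v + τ v • u))` is strongly monotone on the hyperplane
`u^⊥`. Galerkin approximation then gives, for every finite `S ⊆ H`, a point `ξ` with
`‖ξ‖ ≤ ‖g 0‖ / λ` and `⟪g x, x - ξ⟫ ≥ 0` for all `x ∈ S`. These conditions cut out closed
half-spaces, so weak compactness of the ball yields a `z` with `⟪g x, x - z⟫ ≥ 0` for every `x`, and
Minty's trick (`x = z + t • w`, `t → 0⁺`) turns this into `g z = 0`.
-/

open scoped RealInnerProductSpace
open Filter Topology Metric

section WeakCompactness

variable {H : Type*} [NormedAddCommGroup H] [InnerProductSpace ℝ H]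

theorem isCompact_toWeakSpace_closedBall [CompleteSpace H] (r : ℝ) :
    IsCompact (toWeakSpace ℝ H '' closedBall 0 r) := by
  set Φ := (InnerProductSpace.toDual ℝ H).symm
  have hcont :
      Continuous fun φ : WeakDual ℝ H => toWeakSpace ℝ H (Φ (WeakDual.toStrongDual φ)) := by
    refine WeakBilin.continuous_of_continuous_eval _ fun ℓ => ?_
    convert WeakDual.eval_continuous (Φ ℓ) using 2 with φ
    change ℓ (Φ (WeakDual.toStrongDual φ)) = (WeakDual.toStrongDual φ) (Φ ℓ)
    rw [← InnerProductSpace.toDual_symm_apply, real_inner_comm,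
      InnerProductSpace.toDual_symm_apply]
  have := (WeakDual.isCompact_closedBall (0 : StrongDual ℝ H) r).image hcont
  rwa [← Set.image_image (toWeakSpace ℝ H), ← Set.image_image Φ,
    Set.image_preimage_eq _ WeakDual.toStrongDual.surjective, Φ.image_closedBall,
    map_zero] at this

theorem Convex.isClosed_image_toWeakSpace {s : Set H} (hconv : Convex ℝ s) (hs : IsClosed s) :
    IsClosed (toWeakSpace ℝ H '' s) := by
  rw [← closure_eq_iff_isClosed, ← hconv.toWeakSpace_closure ℝ, hs.closure_eq]

theorem closedBall_inter_iInter_nonempty_of_convex [CompleteSpace H] {ι : Type*} (r : ℝ)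
    (t : ι → Set H) (hclosed : ∀ i, IsClosed (t i)) (hconv : ∀ i, Convex ℝ (t i))
    (h : ∀ u : Finset ι, (closedBall 0 r ∩ ⋂ i ∈ u, t i).Nonempty) :
    (closedBall 0 r ∩ ⋂ i, t i).Nonempty := by
  have hW := (toWeakSpace ℝ H).bijective
  have key := (isCompact_toWeakSpace_closedBall r).inter_iInter_nonempty
    (fun i => toWeakSpace ℝ H '' t i) (fun i => (hconv i).isClosed_image_toWeakSpace (hclosed i))
    fun u => by
      simpa only [Set.image_inter hW.injective, Set.image_iInter hW]
        using (h u).image (toWeakSpace ℝ H)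
  rw [← Set.image_iInter hW, ← Set.image_inter hW.injective] at key
  exact key.of_image

end WeakCompactness

section Minty

variable {E : Type*} [NormedAddCommGroup E] [InnerProductSpace ℝ E]

theorem eq_zero_of_forall_inner_nonneg {g : E → E} (hcont : Continuous g) {z : E}
    (h : ∀ x, 0 ≤ ⟪g x, x - z⟫) : g z = 0 := by
  have hdir (w : E) : 0 ≤ ⟪g z, w⟫ := by
    have hpos (t : ℝ) (ht : 0 < t) : 0 ≤ ⟪g (z + t • w), w⟫ := by
      have := h (z + t • w)
      rwa [add_sub_cancel_left, inner_smul_right, mul_nonneg_iff_of_pos_left ht] at this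
    have hlim : Tendsto (fun t : ℝ => ⟪g (z + t • w), w⟫) (𝓝[>] 0) (𝓝 ⟪g z, w⟫) := by
      have : Continuous fun t : ℝ => ⟪g (z + t • w), w⟫ := by fun_prop
      simpa using this.continuousWithinAt.tendsto (x := 0) (s := Set.Ioi 0)
    exact ge_of_tendsto hlim (eventually_nhdsWithin_of_forall hpos)
  simpa using hdir (-g z)

end Minty

def StronglyMonotone {E : Type*} [NormedAddCommGroup E] [InnerProductSpace ℝ E] (c : ℝ)
    (g : E → E) : Prop :=
  ∀ x y, c * ‖x - y‖ ^ 2 ≤ ⟪g x - g y, x - y⟫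

theorem stronglyMonotone_real_iff {c : ℝ} {φ : ℝ → ℝ} :
    StronglyMonotone c φ ↔ ∀ s t, c * (s - t) ^ 2 ≤ (φ s - φ t) * (s - t) := by
  simp only [StronglyMonotone, Real.inner_apply, Real.norm_eq_abs, sq_abs]

namespace StronglyMonotone

variable {E : Type*} [NormedAddCommGroup E] [InnerProductSpace ℝ E] {c : ℝ} {g : E → E}

theorem mul_norm_sub_le (hg : StronglyMonotone c g) (x y : E) : c * ‖x - y‖ ≤ ‖g x - g y‖ := by
  rcases (norm_nonneg (x - y)).eq_or_lt with h | h
  · rw [← h, mul_zero]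
    exact norm_nonneg _
  · refine le_of_mul_le_mul_right ?_ h
    calc c * ‖x - y‖ * ‖x - y‖ = c * ‖x - y‖ ^ 2 := by ring
      _ ≤ ⟪g x - g y, x - y⟫ := hg x y
      _ ≤ ‖g x - g y‖ * ‖x - y‖ := real_inner_le_norm _ _

theorem injective (hg : StronglyMonotone c g) (hc : 0 < c) : Function.Injective g := by
  intro x y hxy
  have := hg.mul_norm_sub_le x y
  rw [hxy, sub_self, norm_zero] at this
  exact sub_eq_zero.mp (norm_le_zero_iff.mp (nonpos_of_mul_nonpos_right this hc))

theorem mul_norm_sub_sq_le_inner (hg : StronglyMonotone c g) {ξ x : E} (h : ⟪g ξ, ξ - x⟫ = 0) :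
    c * ‖ξ - x‖ ^ 2 ≤ ⟪g x, x - ξ⟫ := by
  have := hg ξ x
  rw [inner_sub_left, h] at this
  rw [← neg_sub ξ x, inner_neg_right]
  linarith

theorem exists_eq_zero_real {φ : ℝ → ℝ} (hφ : StronglyMonotone c φ) (hc : 0 < c)
    (hcont : Continuous φ) : ∃ t, φ t = 0 := by
  rw [stronglyMonotone_real_iff] at hφ
  set M := |φ 0| / c + 1
  have hM : 0 < M := by positivity
  have hcM : |φ 0| ≤ c * M := by
    rw [mul_add, mul_div_cancel₀ _ hc.ne']
    linarith
  have hleft : φ (-M) ≤ 0 := by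
    have : c * M ≤ φ 0 - φ (-M) := by nlinarith [hφ (-M) 0]
    linarith [le_abs_self (φ 0)]
  have hright : 0 ≤ φ M := by
    have : c * M ≤ φ M - φ 0 := by nlinarith [hφ M 0]
    linarith [neg_abs_le (φ 0)]
  obtain ⟨t, -, ht⟩ := intermediate_value_Icc (by linarith) hcont.continuousOn ⟨hleft, hright⟩
  exact ⟨t, ht⟩

theorem continuous_of_apply_eq_zero {X : Type*} [TopologicalSpace X] {Φ : X → E → E}
    (hΦ : ∀ v, StronglyMonotone c (Φ v)) (hc : 0 < c) (hcont : ∀ x, Continuous (Φ · x))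
    {τ : X → E} (hτ : ∀ v, Φ v (τ v) = 0) : Continuous τ := by
  refine continuous_iff_continuousAt.mpr fun v => tendsto_iff_norm_sub_tendsto_zero.mpr ?_
  -- `c ‖τ w - τ v‖ ≤ ‖Φ w (τ v)‖`, and `Φ w (τ v) → Φ v (τ v) = 0` as `w → v`
  have hlim : Tendsto (fun w => ‖Φ w (τ v)‖ / c) (𝓝 v) (𝓝 0) := by
    simpa [hτ v] using ((hcont (τ v)).tendsto v).norm.div_const c
  refine squeeze_zero (fun _ => norm_nonneg _) (fun w => ?_) hlim
  rw [le_div_iff₀' hc]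
  simpa [hτ w] using (hΦ w).mul_norm_sub_le (τ w) (τ v)

theorem orthogonalProjectionOnto_comp (hg : StronglyMonotone c g) (K : Submodule ℝ E)
    [K.HasOrthogonalProjection] :
    StronglyMonotone c fun v : K => K.orthogonalProjectionOnto (g v) := by
  intro v w
  simpa [← map_sub] using hg v w

theorem exists_eq_zero_of_orthogonal_span_singleton (hg : StronglyMonotone c g) (hc : 0 < c)
    (hcont : Continuous g) {u : E} (hu : ‖u‖ = 1)
    (hV : ∀ h : (ℝ ∙ u)ᗮ → (ℝ ∙ u)ᗮ, StronglyMonotone c h → Continuous h → ∃ v, h v = 0) :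
    ∃ x, g x = 0 := by
  set V := (ℝ ∙ u)ᗮ
  set Φ : V → ℝ → ℝ := fun v t => ⟪g (v + t • u), u⟫
  have hΦ (v : V) : StronglyMonotone c (Φ v) := stronglyMonotone_real_iff.mpr fun s t => by
    have h := hg (v + s • u) (v + t • u)
    rw [add_sub_add_left_eq_sub, ← sub_smul, norm_smul, hu, mul_one, Real.norm_eq_abs, sq_abs,
      inner_smul_right, inner_sub_left] at h
    simp only [Φ]
    linarith
  have hΦcont (v : V) : Continuous (Φ v) := by fun_prop
  choose τ hτ using fun v => (hΦ v).exists_eq_zero_real hc (hΦcont v)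
  have hτcont : Continuous τ := continuous_of_apply_eq_zero hΦ hc (fun t => by fun_prop) hτ
  set lift : V → E := fun v => v + τ v • u
  have hred : StronglyMonotone c fun v => V.orthogonalProjectionOnto (g (lift v)) := by
    intro v w
    have hsplit : lift v - lift w = ((v : E) - w) + (τ v - τ w) • u := by
      simp only [lift, sub_smul]
      abel
    have horth : ⟪(v : E) - w, (τ v - τ w) • u⟫ = 0 := by
      rw [inner_smul_right, ← Submodule.coe_sub,
        Submodule.mem_orthogonal_singleton_iff_inner_left.mp (v - w).2, mul_zero]
    have hnorm : ‖v - w‖ ^ 2 ≤ ‖lift v - lift w‖ ^ 2 := by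
      rw [hsplit, norm_add_sq_real, horth, mul_zero, add_zero]
      norm_cast
      exact le_add_of_nonneg_right (sq_nonneg _)
    have hinner : ⟪g (lift v) - g (lift w), lift v - lift w⟫ =
        ⟪g (lift v) - g (lift w), (v : E) - w⟫ := by
      have hv : ⟪g (lift v), u⟫ = 0 := hτ v
      have hw : ⟪g (lift w), u⟫ = 0 := hτ w
      rw [hsplit, inner_add_right, inner_smul_right, inner_sub_left _ _ u, hv, hw]
      ring
    calc c * ‖v - w‖ ^ 2 ≤ c * ‖lift v - lift w‖ ^ 2 := by gcongr
      _ ≤ _ := hg _ _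
      _ = _ := by simpa [← map_sub] using hinner
  obtain ⟨v, hv⟩ := hV _ hred (by fun_prop)
  refine ⟨lift v, ?_⟩
  have h₁ : g (lift v) ∈ ℝ ∙ u := by
    rwa [Submodule.orthogonalProjectionOnto_eq_zero_iff, Submodule.orthogonal_orthogonal] at hv
  have h₂ : g (lift v) ∈ V := Submodule.mem_orthogonal_singleton_iff_inner_left.mpr (hτ v)
  have h₃ := Submodule.mem_inf.mpr ⟨h₁, h₂⟩
  rwa [Submodule.inf_orthogonal_eq_bot, Submodule.mem_bot] at h₃

theorem exists_eq_zero_of_finiteDimensional [FiniteDimensional ℝ E] (hg : StronglyMonotone c g)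
    (hc : 0 < c) (hcont : Continuous g) : ∃ x, g x = 0 := by
  induction hn : Module.finrank ℝ E generalizing E with
  | zero =>
    have : Subsingleton E := Module.finrank_zero_iff.mp hn
    exact ⟨0, Subsingleton.elim _ _⟩
  | succ n ih =>
    have : Fact (Module.finrank ℝ E = n + 1) := ⟨hn⟩
    have : Nontrivial E := Module.nontrivial_of_finrank_eq_succ hn
    obtain ⟨x, hx⟩ := exists_ne (0 : E)
    have hu : ‖‖x‖⁻¹ • x‖ = 1 := norm_smul_inv_norm hx
    refine hg.exists_eq_zero_of_orthogonal_span_singleton hc hcont hu fun h hh hhcont => ?_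
    exact ih hh hhcont
      (Submodule.finrank_orthogonal_span_singleton (ne_zero_of_norm_ne_zero (hu ▸ one_ne_zero)))

theorem exists_mem_forall_inner_eq_zero (hg : StronglyMonotone c g) (hc : 0 < c)
    (hcont : Continuous g) (V : Submodule ℝ E) [FiniteDimensional ℝ V] :
    ∃ ξ ∈ V, ∀ y ∈ V, ⟪g ξ, y⟫ = 0 := by
  obtain ⟨ξ, hξ⟩ := (hg.orthogonalProjectionOnto_comp V).exists_eq_zero_of_finiteDimensional hc
    (by fun_prop)
  rw [Submodule.orthogonalProjectionOnto_eq_zero_iff] at hξ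
  exact ⟨ξ, ξ.2, fun y hy => Submodule.inner_left_of_mem_orthogonal hy hξ⟩

theorem exists_eq_zero [CompleteSpace E] (hg : StronglyMonotone c g) (hc : 0 < c)
    (hcont : Continuous g) : ∃ z, g z = 0 := by
  set t : E → Set E := fun x => {z | ⟪g x, z⟫ ≤ ⟪g x, x⟫}
  have hfin (u : Finset E) : (closedBall 0 (‖g 0‖ / c) ∩ ⋂ x ∈ u, t x).Nonempty := by
    obtain ⟨ξ, hξV, hξ⟩ :=
      hg.exists_mem_forall_inner_eq_zero hc hcont (Submodule.span ℝ (u : Set E))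
    have hsol (x : E) (hx : x ∈ Submodule.span ℝ (u : Set E)) :
        c * ‖ξ - x‖ ^ 2 ≤ ⟪g x, x - ξ⟫ :=
      hg.mul_norm_sub_sq_le_inner (hξ _ (Submodule.sub_mem _ hξV hx))
    refine ⟨ξ, ?_, Set.mem_iInter₂.mpr fun x hx => ?_⟩
    · have h0 := hsol 0 (Submodule.zero_mem _)
      rw [sub_zero, zero_sub, inner_neg_right] at h0
      have h1 : c * ‖ξ‖ ^ 2 ≤ ‖g 0‖ * ‖ξ‖ :=
        h0.trans ((neg_le_abs _).trans (abs_real_inner_le_norm _ _))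
      rw [mem_closedBall_zero_iff, le_div_iff₀' hc]
      nlinarith [mul_le_mul_of_nonneg_left h1 hc.le, norm_nonneg (g 0)]
    · have := hsol x (Submodule.subset_span hx)
      rw [inner_sub_right] at this
      exact sub_nonneg.mp (le_trans (by positivity) this)
  obtain ⟨z, -, hz⟩ := closedBall_inter_iInter_nonempty_of_convex _ t
    (fun x => isClosed_le (by fun_prop) continuous_const)
    (fun x => convex_halfSpace_le (innerₗ E (g x)).isLinear _) hfin
  refine ⟨z, eq_zero_of_forall_inner_nonneg hcont fun x => ?_⟩
  rw [inner_sub_right, sub_nonneg]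
  exact Set.mem_iInter.mp hz x

end StronglyMonotone

theorem stmt_2
    {H : Type*} [NormedAddCommGroup H] [InnerProductSpace ℝ H] [CompleteSpace H]
    (F : H → H) (hcont : Continuous F) (lam : ℝ) (hlam : 0 < lam)
    (hdiss : ∀ x x' : H, (inner ℝ (x - x') (F x - F x') : ℝ) ≤ -lam * ‖x - x'‖ ^ 2) :
    ∃! ξ : H, F ξ = 0 := by
  have hG : StronglyMonotone lam (-F) := fun x y => by
    have := hdiss x y
    rw [real_inner_comm] at this
    simp only [Pi.neg_apply, neg_sub_neg, ← neg_sub (F x), inner_neg_left]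
    linarith
  obtain ⟨ξ, hξ⟩ := hG.exists_eq_zero hlam hcont.neg
  rw [Pi.neg_apply, neg_eq_zero] at hξ
  exact ⟨ξ, hξ, fun y hy => hG.injective hlam (by simp [hy, hξ])⟩
end

section
/- Let U : ℝ^N → ℝ be twice continuously differentiable, and suppose that for some λ > 0 and some positive weights w_1, ..., w_N > 0 the weighted monotonicity inequality Σ_i w_i (x_i − x'_i)(∂_i U(x) − ∂_i U(x')) ≥ λ Σ_i w_i (x_i − x'_i)² holds for all x, x' ∈ ℝ^N. Then the Hessian ∇²U(x) satisfies ⟨v, ∇²U(x) v⟩ ≥ λ ‖v‖² for the standard Euclidean inner product, for all x, v ∈ ℝ^N; equivalently, (x − x')·(∇U(x) − ∇U(x')) ≥ λ‖x − x'‖² in the standard (unweighted) inner product. -/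
/-!
Write `H` for the Hessian of `U` at `x`, viewed as a symmetric operator for the Euclidean
inner product. Differentiating the weighted monotonicity inequality along `x + t v` at `t = 0`
gives `⟨v, H v⟩_w ≥ λ ‖v‖_w²` for every `v`. Applied to an eigenvector `v` of `H` with eigenvalue
`μ`, the left side is `μ ‖v‖_w²`, so `μ ≥ λ`; the weights have disappeared, and the spectral
theorem turns the eigenvalue bound into `⟨v, H v⟩ ≥ λ ‖v‖²`. Integrating the Hessian bound along
the segment from `x'` to `x` gives the monotonicity of the gradient.
-/

open Module.End InnerProductSpace

theorem HasDerivAt.le_of_forall_pos_mul_le_sub {f : ℝ → ℝ} {f' a c : ℝ}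
    (hf : HasDerivAt f f' a) (h : ∀ t, 0 < t → c * t ≤ f (a + t) - f a) : c ≤ f' := by
  refine ge_of_tendsto ((hasDerivAt_iff_tendsto_slope_zero.1 hf).mono_left
    (nhdsGT_le_nhdsNE 0)) ?_
  filter_upwards [self_mem_nhdsWithin] with t (ht : 0 < t)
  rw [smul_eq_mul, le_inv_mul_iff₀ ht, mul_comm]
  exact h t ht

theorem hasDerivAt_fderiv_apply_add_smul {E F : Type*} [NormedAddCommGroup E] [NormedSpace ℝ E]
    [NormedAddCommGroup F] [NormedSpace ℝ F] {U : E → F} {x v : E} {t : ℝ}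
    (hU : DifferentiableAt ℝ (fderiv ℝ U) (x + t • v)) (u : E) :
    HasDerivAt (fun s : ℝ => fderiv ℝ U (x + s • v) u)
      (fderiv ℝ (fderiv ℝ U) (x + t • v) v u) t := by
  have hline : HasDerivAt (fun s : ℝ => x + s • v) v t := by
    simpa using ((hasDerivAt_id t).smul_const v).const_add x
  exact (ContinuousLinearMap.apply ℝ F u).hasFDerivAt.comp_hasDerivAt t
    (hU.hasFDerivAt.comp_hasDerivAt t hline)

theorem mul_norm_sq_le_inner_sub_gradient {E : Type*} [NormedAddCommGroup E]
    [InnerProductSpace ℝ E] [CompleteSpace E] {U : E → ℝ}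
    (hU : Differentiable ℝ (fderiv ℝ U))
    {c : ℝ} (hc : ∀ y v, c * ‖v‖ ^ 2 ≤ fderiv ℝ (fderiv ℝ U) y v v) (x x' : E) :
    c * ‖x - x'‖ ^ 2 ≤ ⟪x - x', gradient U x - gradient U x'⟫_ℝ := by
  set d := x - x'
  set g : ℝ → ℝ := fun t => fderiv ℝ U (x' + t • d) d
  have hg : ∀ t, HasDerivAt g (fderiv ℝ (fderiv ℝ U) (x' + t • d) d d) t := fun t =>
    hasDerivAt_fderiv_apply_add_smul (hU _) d
  have := mul_sub_le_image_sub_of_le_deriv (fun t => (hg t).differentiableAt)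
    (fun t => (hg t).deriv ▸ hc _ d) zero_le_one
  simpa [g, d, real_inner_comm d, inner_sub_right, inner_gradient_left] using this

theorem LinearMap.IsSymmetric.mul_norm_sq_le_inner_map_self {E : Type*} [NormedAddCommGroup E]
    [InnerProductSpace ℝ E] [FiniteDimensional ℝ E] {T : E →ₗ[ℝ] E} (hT : T.IsSymmetric)
    {c : ℝ} (hc : ∀ μ, HasEigenvalue T μ → c ≤ μ) (v : E) :
    c * ‖v‖ ^ 2 ≤ ⟪T v, v⟫_ℝ := by
  set b := hT.eigenvectorBasis rfl
  have hnorm : ‖v‖ ^ 2 = ∑ i, b.repr v i ^ 2 := by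
    rw [← b.repr.norm_map v, EuclideanSpace.norm_sq_eq]
    simp
  have hinner : ⟪T v, v⟫_ℝ = ∑ i, hT.eigenvalues rfl i * b.repr v i ^ 2 := by
    rw [← b.repr.inner_map_map, PiLp.inner_apply]
    refine Finset.sum_congr rfl fun i _ => ?_
    simp only [b, hT.eigenvectorBasis_apply_self_apply, RCLike.inner_apply, Real.ringHom_apply]
    ring
  rw [hnorm, hinner, Finset.mul_sum]
  exact Finset.sum_le_sum fun i _ =>
    mul_le_mul_of_nonneg_right (hc _ (hT.hasEigenvalue_eigenvalues rfl i)) (sq_nonneg _)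

variable {ι : Type*} [Fintype ι]

theorem Module.End.HasEigenvalue.le_of_forall_weighted_le {w : ι → ℝ} (hw : ∀ i, 0 < w i)
    {T : EuclideanSpace ℝ ι →ₗ[ℝ] EuclideanSpace ℝ ι} {c : ℝ}
    (hT : ∀ v, c * ∑ i, w i * v i ^ 2 ≤ ∑ i, w i * (v i * T v i))
    {μ : ℝ} (hμ : HasEigenvalue T μ) : c ≤ μ := by
  obtain ⟨v, hv⟩ := hμ.exists_hasEigenvector
  have hpos : 0 < ∑ i, w i * v i ^ 2 := by
    obtain ⟨j, hj⟩ : ∃ j, v j ≠ 0 := by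
      by_contra! h
      exact hv.2 (by ext j; simpa using h j)
    exact Finset.sum_pos' (fun i _ => by have := hw i; positivity)
      ⟨j, Finset.mem_univ j, by have := hw j; positivity⟩
  have hTv : ∑ i, w i * (v i * T v i) = μ * ∑ i, w i * v i ^ 2 := by
    rw [hv.apply_eq_smul, Finset.mul_sum]
    refine Finset.sum_congr rfl fun i _ => ?_
    simp only [PiLp.smul_apply, smul_eq_mul]
    ring
  exact le_of_mul_le_mul_right (hTv ▸ hT v) hpos

variable [DecidableEq ι]

theorem mul_norm_sq_le_apply_self_of_weighted
    {B : EuclideanSpace ℝ ι →L[ℝ] EuclideanSpace ℝ ι →L[ℝ] ℝ}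
    (hB : ∀ u v, B u v = B v u) {w : ι → ℝ} (hw : ∀ i, 0 < w i) {c : ℝ}
    (h : ∀ v, c * ∑ i, w i * v i ^ 2 ≤ ∑ i, w i * (v i * B v (EuclideanSpace.single i 1)))
    (v : EuclideanSpace ℝ ι) : c * ‖v‖ ^ 2 ≤ B v v := by
  set T := continuousLinearMapOfBilin (𝕜 := ℝ) B
  have hTB : ∀ u v, ⟪T u, v⟫_ℝ = B u v := continuousLinearMapOfBilin_apply B
  have hT : (T : EuclideanSpace ℝ ι →ₗ[ℝ] EuclideanSpace ℝ ι).IsSymmetric := by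
    intro u v
    simp only [ContinuousLinearMap.coe_coe]
    rw [hTB, real_inner_comm, hTB, hB]
  have hcoord : ∀ u i, T u i = B u (EuclideanSpace.single i 1) := fun u i => by
    simp [← hTB, EuclideanSpace.inner_single_right]
  have := hT.mul_norm_sq_le_inner_map_self
    (fun μ hμ => hμ.le_of_forall_weighted_le hw fun u => by
      simpa only [ContinuousLinearMap.coe_coe, hcoord] using h u) v
  simpa only [ContinuousLinearMap.coe_coe, hTB] using this

theorem mul_weighted_sq_le_fderiv_fderiv {U : EuclideanSpace ℝ ι → ℝ} {x : EuclideanSpace ℝ ι}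
    (hU : DifferentiableAt ℝ (fderiv ℝ U) x) {w : ι → ℝ} {lam : ℝ}
    (hmono : ∀ x x' : EuclideanSpace ℝ ι,
      (∑ i, w i * ((x i - x' i) *
        (fderiv ℝ U x (EuclideanSpace.single i 1)
          - fderiv ℝ U x' (EuclideanSpace.single i 1))))
        ≥ lam * ∑ i, w i * (x i - x' i) ^ 2)
    (v : EuclideanSpace ℝ ι) :
    lam * ∑ i, w i * v i ^ 2 ≤
      ∑ i, w i * (v i * fderiv ℝ (fderiv ℝ U) x v (EuclideanSpace.single i 1)) := by
  set F : ℝ → ℝ := fun t =>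
    ∑ i, w i * (v i * fderiv ℝ U (x + t • v) (EuclideanSpace.single i 1))
  have hF : HasDerivAt F
      (∑ i, w i * (v i * fderiv ℝ (fderiv ℝ U) x v (EuclideanSpace.single i 1))) 0 :=
    HasDerivAt.fun_sum fun i _ => by
      have := hasDerivAt_fderiv_apply_add_smul (t := 0) (v := v) (by simpa using hU)
        (EuclideanSpace.single i 1)
      rw [zero_smul, add_zero] at this
      exact (this.const_mul (v i)).const_mul (w i)
  refine hF.le_of_forall_pos_mul_le_sub fun t ht => ?_
  have key := hmono (x + t • v) x
  simp only [PiLp.add_apply, PiLp.smul_apply, smul_eq_mul, add_sub_cancel_left] at key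
  have hL : ∑ i, w i * (t * v i * (fderiv ℝ U (x + t • v) (EuclideanSpace.single i 1)
      - fderiv ℝ U x (EuclideanSpace.single i 1))) = t * (F t - F 0) := by
    simp only [F, zero_smul, add_zero, ← Finset.sum_sub_distrib, Finset.mul_sum]
    exact Finset.sum_congr rfl fun i _ => by ring
  have hR : lam * ∑ i, w i * (t * v i) ^ 2 = t * (lam * (∑ i, w i * v i ^ 2) * t) := by
    simp only [Finset.mul_sum, Finset.sum_mul]
    exact Finset.sum_congr rfl fun i _ => by ring
  rw [hL, hR, ge_iff_le] at key
  simpa using le_of_mul_le_mul_left key ht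

theorem stmt_7_general (N : ℕ) (U : EuclideanSpace ℝ (Fin N) → ℝ)
    (hU : ContDiff ℝ 2 U) (lam : ℝ)
    (w : Fin N → ℝ) (hw : ∀ i, 0 < w i)
    (hmono : ∀ x x' : EuclideanSpace ℝ (Fin N),
      (∑ i, w i * ((x i - x' i) *
        (fderiv ℝ U x (EuclideanSpace.single i 1)
          - fderiv ℝ U x' (EuclideanSpace.single i 1))))
        ≥ lam * ∑ i, w i * (x i - x' i) ^ 2) :
    (∀ x v : EuclideanSpace ℝ (Fin N),
      iteratedFDeriv ℝ 2 U x ![v, v] ≥ lam * ‖v‖ ^ 2) ∧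
    (∀ x x' : EuclideanSpace ℝ (Fin N),
      (inner ℝ (x - x') (gradient U x - gradient U x') : ℝ) ≥ lam * ‖x - x'‖ ^ 2) := by
  have hdiff : Differentiable ℝ (fderiv ℝ U) :=
    (hU.fderiv_right (m := 1) le_rfl).differentiable one_ne_zero
  have hhess : ∀ x v, lam * ‖v‖ ^ 2 ≤ fderiv ℝ (fderiv ℝ U) x v v := fun x =>
    mul_norm_sq_le_apply_self_of_weighted (hU.contDiffAt.isSymmSndFDerivAt (by simp)) hw
      (mul_weighted_sq_le_fderiv_fderiv (hdiff x) hmono)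
  refine ⟨fun x v => ?_, mul_norm_sq_le_inner_sub_gradient hdiff hhess⟩
  rw [iteratedFDeriv_two_apply]
  exact hhess x v

theorem stmt_7 (N : ℕ) (U : EuclideanSpace ℝ (Fin N) → ℝ)
    (hU : ContDiff ℝ 2 U) (lam : ℝ) (hlam : 0 < lam)
    (w : Fin N → ℝ) (hw : ∀ i, 0 < w i)
    (hmono : ∀ x x' : EuclideanSpace ℝ (Fin N),
      (∑ i, w i * ((x i - x' i) *
        (fderiv ℝ U x (EuclideanSpace.single i 1)
          - fderiv ℝ U x' (EuclideanSpace.single i 1))))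
        ≥ lam * ∑ i, w i * (x i - x' i) ^ 2) :
    (∀ x v : EuclideanSpace ℝ (Fin N),
      iteratedFDeriv ℝ 2 U x ![v, v] ≥ lam * ‖v‖ ^ 2) ∧
    (∀ x x' : EuclideanSpace ℝ (Fin N),
      (inner ℝ (x - x') (gradient U x - gradient U x') : ℝ) ≥ lam * ‖x - x'‖ ^ 2) :=
  stmt_7_general N U hU lam w hw hmono
end

section
/- Fix γ ∈ (0,1), n ∈ ℕ, d ∈ ℕ, and constants ζ, ζ̃, θ ≥ 0 with ζ > θ(1+γ)²/(2γ) and ζ̃ > θ(1+γ)/(2γ). Suppose vectors u_0, ..., u_n ∈ ℝ^d and scalars s_0, ..., s_n ∈ ℝ satisfy: s_0 ≥ ζ̃‖u_0‖² − θ‖u_0‖‖u_1‖, s_k ≥ ζ‖u_k‖² − θ‖u_k‖(‖u_{k−1}‖ + ‖u_{k+1}‖) for 1 ≤ k ≤ n−1, and s_n ≥ ζ̃‖u_n‖² − θ‖u_n‖‖u_{n−1}‖. Then for any λ with 0 < λ ≤ min{ζ − θ(1+γ)²/(2γ), ζ̃ − θ(1+γ)/(2γ)} and for every m with 0 ≤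 m ≤ n: Σ_{k=0}^n γ^{|k−m|} s_k ≥ λ Σ_{k=0}^n γ^{|k−m|} ‖u_k‖². -/
private lemma step0' (γ θ ζt lam w0 w1 a0 a1 s0 : ℝ) (hγ0 : 0 < γ) (hθ : 0 ≤ θ)
    (ha0 : 0 ≤ a0) (ha1 : 0 ≤ a1) (hw0 : 0 < w0)
    (hwn : γ * w1 ≤ w0) (hL2 : θ * (1 + γ) ≤ 2 * γ * (ζt - lam))
    (hs : s0 ≥ ζt * a0 ^ 2 - θ * a0 * a1) :
    w0 * s0 ≥ lam * (w0 * a0 ^ 2) + θ / 2 * w1 * a0 ^ 2 - θ / 2 * w0 * a1 ^ 2 := by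
  have H1 : 0 ≤ γ * w0 * (s0 - (ζt * a0 ^ 2 - θ * a0 * a1)) :=
    mul_nonneg (mul_nonneg hγ0.le hw0.le) (by linarith)
  have H2 : 0 ≤ γ * θ * w0 * (a0 - a1) ^ 2 :=
    mul_nonneg (mul_nonneg (mul_nonneg hγ0.le hθ) hw0.le) (sq_nonneg _)
  have H3 : γ * w1 * (θ * a0 ^ 2) ≤ w0 * (θ * a0 ^ 2) :=
    mul_le_mul_of_nonneg_right hwn (mul_nonneg hθ (sq_nonneg _))
  have H4 : θ * (1 + γ) * (w0 * a0 ^ 2) ≤ 2 * γ * (ζt - lam) * (w0 * a0 ^ 2) :=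
    mul_le_mul_of_nonneg_right hL2 (mul_nonneg hw0.le (sq_nonneg _))
  have key : 0 ≤ 2 * γ * (w0 * s0 -
      (lam * (w0 * a0 ^ 2) + θ / 2 * w1 * a0 ^ 2 - θ / 2 * w0 * a1 ^ 2)) := by
    nlinarith [H1, H2, H3, H4]
  nlinarith [key, hγ0]

private lemma stepMid' (γ θ ζ lam w0 w1 w2 a0 a1 a2 s1 S B : ℝ) (hγ0 : 0 < γ) (hθ : 0 ≤ θ)
    (hw1 : 0 < w1)
    (hIH : S ≥ lam * B + θ / 2 * w1 * a0 ^ 2 - θ / 2 * w0 * a1 ^ 2)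
    (hs : s1 ≥ ζ * a1 ^ 2 - θ * a1 * (a0 + a2))
    (hw3 : γ * (w0 + w2) ≤ (γ ^ 2 + 1) * w1)
    (hL1 : θ * (1 + γ) ^ 2 ≤ 2 * γ * (ζ - lam)) :
    S + w1 * s1 ≥ lam * (B + w1 * a1 ^ 2) + θ / 2 * w2 * a1 ^ 2 - θ / 2 * w1 * a2 ^ 2 := by
  have H0 : 0 ≤ γ * (S - (lam * B + θ / 2 * w1 * a0 ^ 2 - θ / 2 * w0 * a1 ^ 2)) :=
    mul_nonneg hγ0.le (by linarith)
  have H1 : 0 ≤ γ * w1 * (s1 - (ζ * a1 ^ 2 - θ * a1 * (a0 + a2))) :=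
    mul_nonneg (mul_nonneg hγ0.le hw1.le) (by linarith)
  have H2 : 0 ≤ γ * θ * w1 * (a0 - a1) ^ 2 :=
    mul_nonneg (mul_nonneg (mul_nonneg hγ0.le hθ) hw1.le) (sq_nonneg _)
  have H2' : 0 ≤ γ * θ * w1 * (a1 - a2) ^ 2 :=
    mul_nonneg (mul_nonneg (mul_nonneg hγ0.le hθ) hw1.le) (sq_nonneg _)
  have H3 : γ * (w0 + w2) * (θ * a1 ^ 2) ≤ (γ ^ 2 + 1) * w1 * (θ * a1 ^ 2) :=
    mul_le_mul_of_nonneg_right hw3 (mul_nonneg hθ (sq_nonneg _))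
  have H4 : θ * (1 + γ) ^ 2 * (w1 * a1 ^ 2) ≤ 2 * γ * (ζ - lam) * (w1 * a1 ^ 2) :=
    mul_le_mul_of_nonneg_right hL1 (mul_nonneg hw1.le (sq_nonneg _))
  have key : 0 ≤ 2 * γ * (S + w1 * s1 -
      (lam * (B + w1 * a1 ^ 2) + θ / 2 * w2 * a1 ^ 2 - θ / 2 * w1 * a2 ^ 2)) := by
    nlinarith [H0, H1, H2, H2', H3, H4]
  nlinarith [key, hγ0]

private lemma stepN' (γ θ ζt lam w0 w1 a0 a1 s1 S B : ℝ) (hγ0 : 0 < γ) (hθ : 0 ≤ θ)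
    (hw1 : 0 < w1)
    (hIH : S ≥ lam * B + θ / 2 * w1 * a0 ^ 2 - θ / 2 * w0 * a1 ^ 2)
    (hs : s1 ≥ ζt * a1 ^ 2 - θ * a1 * a0)
    (hwn2 : γ * w0 ≤ w1)
    (hL2 : θ * (1 + γ) ≤ 2 * γ * (ζt - lam)) :
    S + w1 * s1 ≥ lam * (B + w1 * a1 ^ 2) := by
  have H0 : 0 ≤ γ * (S - (lam * B + θ / 2 * w1 * a0 ^ 2 - θ / 2 * w0 * a1 ^ 2)) :=
    mul_nonneg hγ0.le (by linarith)
  have H1 : 0 ≤ γ * w1 * (s1 - (ζt * a1 ^ 2 - θ * a1 * a0)) :=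
    mul_nonneg (mul_nonneg hγ0.le hw1.le) (by linarith)
  have H2 : 0 ≤ γ * θ * w1 * (a0 - a1) ^ 2 :=
    mul_nonneg (mul_nonneg (mul_nonneg hγ0.le hθ) hw1.le) (sq_nonneg _)
  have H3 : γ * w0 * (θ * a1 ^ 2) ≤ w1 * (θ * a1 ^ 2) :=
    mul_le_mul_of_nonneg_right hwn2 (mul_nonneg hθ (sq_nonneg _))
  have H4 : θ * (1 + γ) * (w1 * a1 ^ 2) ≤ 2 * γ * (ζt - lam) * (w1 * a1 ^ 2) :=
    mul_le_mul_of_nonneg_right hL2 (mul_nonneg hw1.le (sq_nonneg _))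
  have key : 0 ≤ 2 * γ * (S + w1 * s1 - lam * (B + w1 * a1 ^ 2)) := by
    nlinarith [H0, H1, H2, H3, H4]
  nlinarith [key, hγ0]

private lemma aux' (γ θ ζ ζt lam : ℝ) (w a s : ℕ → ℝ) (N : ℕ)
    (hγ0 : 0 < γ) (hθ : 0 ≤ θ)
    (ha : ∀ k, 0 ≤ a k) (wpos : ∀ k, 0 < w k)
    (hwn : ∀ k, γ * w (k + 1) ≤ w k) (hwn2 : ∀ k, γ * w k ≤ w (k + 1))
    (hw3 : ∀ j, γ * (w j + w (j + 2)) ≤ (γ ^ 2 + 1) * w (j + 1))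
    (hL1 : θ * (1 + γ) ^ 2 ≤ 2 * γ * (ζ - lam))
    (hL2 : θ * (1 + γ) ≤ 2 * γ * (ζt - lam))
    (hs0 : s 0 ≥ ζt * a 0 ^ 2 - θ * a 0 * a 1)
    (hsk : ∀ k, k + 1 ≤ N → s (k + 1) ≥ ζ * a (k + 1) ^ 2 - θ * a (k + 1) * (a k + a (k + 2)))
    (hsN : s (N + 1) ≥ ζt * a (N + 1) ^ 2 - θ * a (N + 1) * a N) :
    ∑ k ∈ Finset.range (N + 2), w k * s k
      ≥ lam * ∑ k ∈ Finset.range (N + 2), w k * a k ^ 2 := by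
  have key : ∀ j, j ≤ N →
      (∑ k ∈ Finset.range (j + 1), w k * s k)
        ≥ lam * (∑ k ∈ Finset.range (j + 1), w k * a k ^ 2)
          + θ / 2 * w (j + 1) * a j ^ 2 - θ / 2 * w j * a (j + 1) ^ 2 := by
    intro j
    induction j with
    | zero =>
      intro _
      simp only [zero_add, Finset.sum_range_one]
      exact step0' γ θ ζt lam (w 0) (w 1) (a 0) (a 1) (s 0) hγ0 hθ (ha 0) (ha 1)
        (wpos 0) (hwn 0) hL2 hs0
    | succ i ih =>
      intro hi
      have hIH := ih (by omega)
      have e1 := Finset.sum_range_succ (fun k => w k * s k) (i + 1)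
      have e2 := Finset.sum_range_succ (fun k => w k * a k ^ 2) (i + 1)
      rw [e1, e2]
      have hsk1 : s (i + 1) ≥ ζ * a (i + 1) ^ 2 - θ * a (i + 1) * (a i + a (i + 2)) :=
        hsk i (by omega)
      exact stepMid' γ θ ζ lam (w i) (w (i + 1)) (w (i + 2)) (a i) (a (i + 1)) (a (i + 2))
        (s (i + 1)) _ _ hγ0 hθ (wpos (i + 1)) hIH hsk1 (hw3 i) hL1
  have h1 := key N le_rfl
  have e1 := Finset.sum_range_succ (fun k => w k * s k) (N + 1)
  have e2 := Finset.sum_range_succ (fun k => w k * a k ^ 2) (N + 1)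
  rw [show N + 2 = (N + 1) + 1 from rfl, e1, e2]
  exact stepN' γ θ ζt lam (w N) (w (N + 1)) (a N) (a (N + 1)) (s (N + 1)) _ _ hγ0 hθ
    (wpos (N + 1)) h1 hsN (hwn2 N) hL2

theorem stmt_9 (γ : ℝ) (hγ : γ ∈ Set.Ioo (0 : ℝ) 1) (n d : ℕ)
    (ζ ζt θ : ℝ) (hθ : 0 ≤ θ)
    (hζ : ζ > θ * (1 + γ) ^ 2 / (2 * γ))
    (hζt : ζt > θ * (1 + γ) / (2 * γ))
    (u : ℕ → EuclideanSpace ℝ (Fin d)) (s : ℕ → ℝ)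
    (hs0 : s 0 ≥ ζt * ‖u 0‖ ^ 2 - θ * ‖u 0‖ * ‖u 1‖)
    (hsk : ∀ k, 1 ≤ k → k ≤ n - 1 →
      s k ≥ ζ * ‖u k‖ ^ 2 - θ * ‖u k‖ * (‖u (k - 1)‖ + ‖u (k + 1)‖))
    (hsn : s n ≥ ζt * ‖u n‖ ^ 2 - θ * ‖u n‖ * ‖u (n - 1)‖)
    (lam : ℝ) (hlam : 0 < lam)
    (hlam' : lam ≤ min (ζ - θ * (1 + γ) ^ 2 / (2 * γ)) (ζt - θ * (1 + γ) / (2 * γ))) :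
    ∀ m ≤ n,
      (∑ k ∈ Finset.range (n + 1), γ ^ ((k : ℤ) - (m : ℤ)).natAbs * s k)
        ≥ lam * ∑ k ∈ Finset.range (n + 1), γ ^ ((k : ℤ) - (m : ℤ)).natAbs * ‖u k‖ ^ 2 := by
  obtain ⟨hγ0, hγ1⟩ := hγ
  intro m hm
  have h2γ : (0:ℝ) < 2 * γ := by linarith
  have hL1 : θ * (1 + γ) ^ 2 ≤ 2 * γ * (ζ - lam) := by
    have h := le_trans hlam' (min_le_left _ _)
    have h' : θ * (1 + γ) ^ 2 / (2 * γ) ≤ ζ - lam := by linarith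
    have := (div_le_iff₀ h2γ).mp h'
    linarith
  have hL2 : θ * (1 + γ) ≤ 2 * γ * (ζt - lam) := by
    have h := le_trans hlam' (min_le_right _ _)
    have h' : θ * (1 + γ) / (2 * γ) ≤ ζt - lam := by linarith
    have := (div_le_iff₀ h2γ).mp h'
    linarith
  rcases Nat.eq_zero_or_pos n with hn | hn
  · subst hn
    interval_cases m
    have hsn' : s 0 ≥ ζt * ‖u 0‖ ^ 2 - θ * ‖u 0‖ * ‖u 0‖ := by simpa using hsn
    have e1 : ∑ k ∈ Finset.range (0 + 1), γ ^ ((k : ℤ) - ((0 : ℕ) : ℤ)).natAbs * s k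
        = s 0 := by simp
    have e2 : ∑ k ∈ Finset.range (0 + 1), γ ^ ((k : ℤ) - ((0 : ℕ) : ℤ)).natAbs * ‖u k‖ ^ 2
        = ‖u 0‖ ^ 2 := by simp
    rw [e1, e2]
    nlinarith [mul_nonneg hγ0.le (sub_nonneg.mpr hsn'),
      mul_le_mul_of_nonneg_right hL2 (sq_nonneg ‖u 0‖),
      mul_nonneg (mul_nonneg hθ (by linarith : (0:ℝ) ≤ 1 - γ)) (sq_nonneg ‖u 0‖), hγ0]
  · obtain ⟨N, rfl⟩ : ∃ N, n = N + 1 := ⟨n - 1, by omega⟩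
    set w : ℕ → ℝ := fun k => γ ^ ((k : ℤ) - (m : ℤ)).natAbs with hwdef
    have wpos : ∀ k, 0 < w k := fun k => pow_pos hγ0 _
    have hwn : ∀ k : ℕ, γ * w (k + 1) ≤ w k := by
      intro k
      have h1 : (((k : ℕ) : ℤ) - m).natAbs ≤ ((((k + 1 : ℕ)) : ℤ) - m).natAbs + 1 := by
        push_cast; omega
      calc γ * w (k + 1) = γ ^ (((((k + 1 : ℕ)) : ℤ) - m).natAbs + 1) := by
            rw [pow_succ]; ring
        _ ≤ γ ^ (((k : ℕ) : ℤ) - m).natAbs :=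
            pow_le_pow_of_le_one hγ0.le hγ1.le h1
    have hwn2 : ∀ k : ℕ, γ * w k ≤ w (k + 1) := by
      intro k
      have h1 : ((((k + 1 : ℕ)) : ℤ) - m).natAbs ≤ (((k : ℕ) : ℤ) - m).natAbs + 1 := by
        push_cast; omega
      calc γ * w k = γ ^ (((((k : ℕ)) : ℤ) - m).natAbs + 1) := by
            rw [pow_succ]; ring
        _ ≤ γ ^ ((((k + 1 : ℕ)) : ℤ) - m).natAbs :=
            pow_le_pow_of_le_one hγ0.le hγ1.le h1
    have hw3 : ∀ j : ℕ, γ * (w j + w (j + 2)) ≤ (γ ^ 2 + 1) * w (j + 1) := by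
      intro j
      rcases le_or_gt (m : ℤ) ((j : ℕ) + 1 : ℤ) with h | h
      · have he : ((((j + 2 : ℕ)) : ℤ) - m).natAbs = ((((j + 1 : ℕ)) : ℤ) - m).natAbs + 1 := by
          push_cast; omega
        have h2 : w (j + 2) = γ * w (j + 1) := by
          show γ ^ _ = γ * γ ^ _
          rw [he, pow_succ]; ring
        have h3 := hwn2 j
        nlinarith [wpos (j + 1), wpos j]
      · have he : ((((j : ℕ)) : ℤ) - m).natAbs = ((((j + 1 : ℕ)) : ℤ) - m).natAbs + 1 := by
          push_cast; omega
        have h2 : w j = γ * w (j + 1) := by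
          show γ ^ _ = γ * γ ^ _
          rw [he, pow_succ]; ring
        have h3 := hwn (j + 1)
        nlinarith [wpos (j + 1), wpos (j + 2)]
    have hsk' : ∀ k, k + 1 ≤ N → s (k + 1) ≥ ζ * ‖u (k + 1)‖ ^ 2
        - θ * ‖u (k + 1)‖ * (‖u k‖ + ‖u (k + 2)‖) := by
      intro k hk
      have hb : k + 1 ≤ N + 1 - 1 := by omega
      have := hsk (k + 1) (Nat.le_add_left 1 k) hb
      simpa using this
    have hsn' : s (N + 1) ≥ ζt * ‖u (N + 1)‖ ^ 2 - θ * ‖u (N + 1)‖ * ‖u N‖ := by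
      simpa using hsn
    exact aux' γ θ ζ ζt lam w (fun k => ‖u k‖) s N hγ0 hθ (fun k => norm_nonneg _)
      wpos hwn hwn2 hw3 hL1 hL2 hs0 hsk' hsn'
end
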